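/- Let P be a symmetric Laurent polynomial and let P = a·b = a'·b' be two factorizations into symmetric Laurent polynomials a, b, a', b' with Bézout relations a·x + b·y = 1 and a'·x' + b'·y' = 1. If there is a unit v of ℤ[t,t⁻¹] with −ax + by ≡ v·(−a'x' + b'y') mod 2P, then v = ±1, and moreover either (a,b) = ±(a',b') or (a,b) = ±(b',a'). -/

import Mathlib

open LaurentPolynomial

noncomputable instance : IsDomain (LaurentPolynomial ℤ) :=
  NoZeroDivisors.to_isDomain _

private lemma two_dvd_apply {f g : LaurentPolynomial ℤ} (h : f = 2 * g) (k : ℤ) :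
    (2 : ℤ) ∣ f.coeff k := by
  have hf : f = g + g := by rw [h]; ring
  refine ⟨g.coeff k, ?_⟩
  rw [hf]
  have : (g + g).coeff k = g.coeff k + g.coeff k := Finsupp.add_apply g.coeff g.coeff k
  rw [this]; ring

private lemma two_ne : (2 : LaurentPolynomial ℤ) ≠ 0 := by
  intro h
  have h0 : (2 : LaurentPolynomial ℤ).coeff 0 = 0 := by rw [h]; rfl
  have h1 : (2 : LaurentPolynomial ℤ) = 1 + 1 := by norm_num
  rw [h1] at h0
  have : ((1 : LaurentPolynomial ℤ) + 1).coeff 0 = (1 : LaurentPolynomial ℤ).coeff 0 + (1 : LaurentPolynomial ℤ).coeff 0 :=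
    Finsupp.add_apply _ _ _
  rw [this] at h0
  have hone : (1 : LaurentPolynomial ℤ).coeff 0 = 1 := by
    rw [AddMonoidAlgebra.one_def]
    exact Finsupp.single_eq_same
  rw [hone] at h0
  omega

private lemma T_coeff_same (n : ℤ) : (T n : LaurentPolynomial ℤ).coeff n = 1 := by
  show (Finsupp.single n 1 : ℤ →₀ ℤ) n = 1
  exact Finsupp.single_eq_same

private lemma one_coeff_ne {n : ℤ} (hn : n ≠ 0) : (1 : LaurentPolynomial ℤ).coeff n = 0 := by
  rw [AddMonoidAlgebra.one_def]
  exact Finsupp.single_eq_of_ne hn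

private lemma unit_form {v : LaurentPolynomial ℤ} (hv : IsUnit v) :
    ∃ n : ℤ, v = T n ∨ v = -T n := by
  obtain ⟨u, rfl⟩ := hv
  obtain ⟨n, p, hp⟩ := (u : LaurentPolynomial ℤ).exists_T_pow
  obtain ⟨m, q, hq⟩ := ((u⁻¹ : (LaurentPolynomial ℤ)ˣ) : LaurentPolynomial ℤ).exists_T_pow
  have hmul : (u : LaurentPolynomial ℤ) * ((u⁻¹ : (LaurentPolynomial ℤ)ˣ) : LaurentPolynomial ℤ) = 1 :=
    u.mul_inv
  have hpq : Polynomial.toLaurent (p * q) = Polynomial.toLaurent (Polynomial.X ^ (n + m)) := by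
    rw [map_mul, hp, hq, Polynomial.toLaurent_X_pow]
    push_cast
    rw [T_add]
    calc (u : LaurentPolynomial ℤ) * T n * (((u⁻¹ : (LaurentPolynomial ℤ)ˣ) : LaurentPolynomial ℤ) * T m)
        = ((u : LaurentPolynomial ℤ) * ((u⁻¹ : (LaurentPolynomial ℤ)ˣ) : LaurentPolynomial ℤ)) * (T n * T m) := by ring
      _ = T (n : ℤ) * T (m : ℤ) := by rw [hmul, one_mul]
  have hpqX : p * q = Polynomial.X ^ (n + m) := Polynomial.toLaurent_injective hpq
  have hpdvd : p ∣ (Polynomial.X : Polynomial ℤ) ^ (n + m) := ⟨q, hpqX.symm⟩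
  obtain ⟨i, _, hass⟩ := (dvd_prime_pow Polynomial.prime_X (n + m)).mp hpdvd
  obtain ⟨w, hw⟩ := hass
  obtain ⟨r, hr, hrw⟩ := Polynomial.isUnit_iff.mp w.isUnit
  have hu_eq : (u : LaurentPolynomial ℤ) = Polynomial.toLaurent p * T (-(n : ℤ)) := by
    rw [hp, mul_assoc, ← T_add]
    norm_num
  rcases Int.isUnit_iff.mp hr with rfl | rfl
  · -- w = C 1 = 1, so p = X ^ i
    have hw1 : (w : Polynomial ℤ) = 1 := by rw [← hrw]; simp
    have hpX : p = Polynomial.X ^ i := by rw [← hw, hw1, mul_one]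
    refine ⟨(i : ℤ) - n, Or.inl ?_⟩
    rw [hu_eq, hpX, Polynomial.toLaurent_X_pow, ← T_add]
    ring_nf
  · -- w = C (-1) = -1, so p = -X ^ i
    have hw1 : (w : Polynomial ℤ) = -1 := by rw [← hrw]; simp
    have hpX : p = -Polynomial.X ^ i := by
      have := hw
      rw [hw1] at this
      linear_combination -this
    refine ⟨(i : ℤ) - n, Or.inr ?_⟩
    rw [hu_eq, hpX, map_neg, Polynomial.toLaurent_X_pow, neg_mul, ← T_add]
    ring_nf

private lemma sub_apply' (f g : LaurentPolynomial ℤ) (k : ℤ) : (f - g).coeff k = f.coeff k - g.coeff k :=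
  Finsupp.sub_apply f.coeff g.coeff k

private lemma add_apply' (f g : LaurentPolynomial ℤ) (k : ℤ) : (f + g).coeff k = f.coeff k + g.coeff k :=
  Finsupp.add_apply f.coeff g.coeff k

private lemma two_dvd_T {n : ℤ}
    (h : (2 : LaurentPolynomial ℤ) ∣ 1 - T n ∨ (2 : LaurentPolynomial ℤ) ∣ 1 + T n) :
    n = 0 := by
  by_contra hn
  rcases h with ⟨g, hg⟩ | ⟨g, hg⟩
  · have h2 := two_dvd_apply hg n
    rw [sub_apply', one_coeff_ne hn, T_coeff_same] at h2
    omega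
  · have h2 := two_dvd_apply hg n
    rw [add_apply', one_coeff_ne hn, T_coeff_same] at h2
    omega

private lemma T_inj {n m : ℤ} (h : (T n : LaurentPolynomial ℤ) = T m) : n = m := by
  by_contra hne
  have := congrArg (fun f : LaurentPolynomial ℤ => f.coeff n) h
  rw [T_coeff_same] at this
  have : (1 : ℤ) = (Finsupp.single m 1 : ℤ →₀ ℤ) n := this
  rw [Finsupp.single_eq_of_ne hne] at this
  omega

private lemma assoc_symm {a c : LaurentPolynomial ℤ} (ha0 : a ≠ 0) (ha : invert a = a)
    (hc : invert c = c) (h1 : a ∣ c) (h2 : c ∣ a) : c = a ∨ c = -a := by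
  obtain ⟨u, hu⟩ := associated_of_dvd_dvd h1 h2
  obtain ⟨n, hn | hn⟩ := unit_form u.isUnit
  · have hceq : c = a * T n := by rw [← hu, hn]
    have hinv : c = a * T (-n) := by
      conv_lhs => rw [← hc, hceq, map_mul, ha, invert_T]
    have hT : (T n : LaurentPolynomial ℤ) = T (-n) := by
      exact (mul_left_cancel₀ ha0 (hceq.symm.trans hinv))
    have hn0 : n = 0 := by have := T_inj hT; omega
    left
    rw [hceq, hn0, T_zero, mul_one]
  · have hceq : c = a * (-T n) := by rw [← hu, hn]
    have hinv : c = a * (-T (-n)) := by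
      conv_lhs => rw [← hc, hceq, map_mul, ha, map_neg, invert_T]
    have hT : (-T n : LaurentPolynomial ℤ) = -T (-n) :=
      mul_left_cancel₀ ha0 (hceq.symm.trans hinv)
    have hn0 : n = 0 := by have := T_inj (neg_injective hT); omega
    right
    rw [hceq, hn0, T_zero, mul_neg_one]

private lemma symm_unit {s : LaurentPolynomial ℤ} (hs : invert s = s) (hu : IsUnit s) :
    s = 1 ∨ s = -1 := by
  have h1 : invert (1 : LaurentPolynomial ℤ) = 1 := map_one _
  exact assoc_symm one_ne_zero h1 hs (one_dvd s) hu.dvd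

private lemma core (P a b a' b' x y x' y' : LaurentPolynomial ℤ)
    (ha : invert a = a) (hb : invert b = b) (ha' : invert a' = a') (hb' : invert b' = b')
    (hfac : P = a * b) (hfac' : P = a' * b')
    (hbez : a * x + b * y = 1) (hbez' : a' * x' + b' * y' = 1)
    (h1 : P ∣ a * x - a' * x') (h2 : P ∣ b * y - b' * y') :
    (a = a' ∧ b = b') ∨ (a = -a' ∧ b = -b') := by
  by_cases hP0 : P = 0
  · -- degenerate case
    have hab : a * b = 0 := by rw [← hfac, hP0]
    have ha'b' : a' * b' = 0 := by rw [← hfac', hP0]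
    rw [hP0] at h1 h2
    have h1' : a * x = a' * x' := sub_eq_zero.mp (zero_dvd_iff.mp h1)
    have h2' : b * y = b' * y' := sub_eq_zero.mp (zero_dvd_iff.mp h2)
    rcases mul_eq_zero.mp hab with haz | hbz
    · have hby : b * y = 1 := by rw [haz, zero_mul, zero_add] at hbez; exact hbez
      have ha'x' : a' * x' = 0 := by rw [← h1', haz, zero_mul]
      rcases mul_eq_zero.mp ha'b' with ha'z | hb'z
      · have hb'y' : b' * y' = 1 := by rw [ha'z, zero_mul, zero_add] at hbez'; exact hbez'
        have hbu := symm_unit hb (IsUnit.of_mul_eq_one _ hby)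
        have hb'u := symm_unit hb' (IsUnit.of_mul_eq_one _ hb'y')
        rcases hbu with rfl | rfl <;> rcases hb'u with rfl | rfl
        · exact Or.inl ⟨by rw [haz, ha'z], rfl⟩
        · exact Or.inr ⟨by rw [haz, ha'z, neg_zero], by norm_num⟩
        · exact Or.inr ⟨by rw [haz, ha'z, neg_zero], by norm_num⟩
        · exact Or.inl ⟨by rw [haz, ha'z], rfl⟩
      · exfalso
        rw [hb'z, zero_mul, add_zero] at hbez'
        rw [hbez'] at ha'x'
        exact one_ne_zero ha'x'
    · have hax : a * x = 1 := by rw [hbz, zero_mul, add_zero] at hbez; exact hbez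
      have hb'y' : b' * y' = 0 := by rw [← h2', hbz, zero_mul]
      rcases mul_eq_zero.mp ha'b' with ha'z | hb'z
      · exfalso
        rw [ha'z, zero_mul, zero_add] at hbez'
        rw [hbez'] at hb'y'
        exact one_ne_zero hb'y'
      · have ha'x' : a' * x' = 1 := by rw [hb'z, zero_mul, add_zero] at hbez'; exact hbez'
        have hau := symm_unit ha (IsUnit.of_mul_eq_one _ hax)
        have ha'u := symm_unit ha' (IsUnit.of_mul_eq_one _ ha'x')
        rcases hau with rfl | rfl <;> rcases ha'u with rfl | rfl
        · exact Or.inl ⟨rfl, by rw [hbz, hb'z]⟩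
        · exact Or.inr ⟨by norm_num, by rw [hbz, hb'z, neg_zero]⟩
        · exact Or.inr ⟨by norm_num, by rw [hbz, hb'z, neg_zero]⟩
        · exact Or.inl ⟨rfl, by rw [hbz, hb'z]⟩
  · -- main case : P ≠ 0
    have ha0 : a ≠ 0 := fun h => hP0 (by rw [hfac, h, zero_mul])
    have hb0 : b ≠ 0 := fun h => hP0 (by rw [hfac, h, mul_zero])
    have ha'0 : a' ≠ 0 := fun h => hP0 (by rw [hfac', h, zero_mul])
    have hb'0 : b' ≠ 0 := fun h => hP0 (by rw [hfac', h, mul_zero])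
    have hPP : a * b = a' * b' := by rw [← hfac, ← hfac']
    have h1ab : a * b ∣ a * x - a' * x' := hfac ▸ h1
    have h1a'b' : a' * b' ∣ a * x - a' * x' := hfac' ▸ h1
    have h2ab : a * b ∣ b * y - b' * y' := hfac ▸ h2
    have h2a'b' : a' * b' ∣ b * y - b' * y' := hfac' ▸ h2
    -- b ∣ b' * x - b * x'
    have db : b ∣ b' * x - b * x' := by
      have key : a * (b' * x - b * x') = (a * x - a' * x') * b' := by
        linear_combination (-x') * hPP
      have : a * b ∣ a * (b' * x - b * x') := by
        rw [key]; exact h1ab.mul_right b'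
      exact (mul_dvd_mul_iff_left ha0).mp this
    -- b' ∣ b' * x - b * x'
    have db' : b' ∣ b' * x - b * x' := by
      have key : a' * (b' * x - b * x') = (a * x - a' * x') * b := by
        linear_combination (-x) * hPP
      have : a' * b' ∣ a' * (b' * x - b * x') := by
        rw [key]; exact h1a'b'.mul_right b
      exact (mul_dvd_mul_iff_left ha'0).mp this
    -- a ∣ a' * y - a * y'
    have da : a ∣ a' * y - a * y' := by
      have key : b * (a' * y - a * y') = (b * y - b' * y') * a' := by
        linear_combination (-y') * hPP
      have : b * a ∣ b * (a' * y - a * y') := by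
        rw [key, mul_comm b a]; exact h2ab.mul_right a'
      exact (mul_dvd_mul_iff_left hb0).mp this
    -- a' ∣ a' * y - a * y'
    have da' : a' ∣ a' * y - a * y' := by
      have key : b' * (a' * y - a * y') = (b * y - b' * y') * a := by
        linear_combination (-y) * hPP
      have : b' * a' ∣ b' * (a' * y - a * y') := by
        rw [key, mul_comm b' a']; exact h2a'b'.mul_right a
      exact (mul_dvd_mul_iff_left hb'0).mp this
    have hbbx : b ∣ b' * x := by
      have : b' * x = (b' * x - b * x') + b * x' := by ring
      rw [this]; exact dvd_add db (dvd_mul_right b x')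
    have hbbx' : b' ∣ b * x' := by
      have : b * x' = -((b' * x - b * x') - b' * x) := by ring
      rw [this]; exact ((db'.sub (dvd_mul_right b' x))).neg_right
    have haay : a ∣ a' * y := by
      have : a' * y = (a' * y - a * y') + a * y' := by ring
      rw [this]; exact dvd_add da (dvd_mul_right a y')
    have haay' : a' ∣ a * y' := by
      have : a * y' = -((a' * y - a * y') - a' * y) := by ring
      rw [this]; exact ((da'.sub (dvd_mul_right a' y))).neg_right
    have hbb' : b ∣ b' := by
      have hb'eq : b' = a * (b' * x) + b * (b' * y) := by linear_combination (-b') * hbez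
      rw [hb'eq]
      exact dvd_add (hbbx.mul_left a) (dvd_mul_right b _)
    have hb'b : b' ∣ b := by
      have hbeq : b = a' * (b * x') + b' * (b * y') := by linear_combination (-b) * hbez'
      rw [hbeq]
      exact dvd_add (hbbx'.mul_left a') (dvd_mul_right b' _)
    have haa' : a ∣ a' := by
      have ha'eq : a' = a * (a' * x) + b * (a' * y) := by linear_combination (-a') * hbez
      rw [ha'eq]
      exact dvd_add (dvd_mul_right a _) (haay.mul_left b)
    have ha'a : a' ∣ a := by
      have haeq : a = a' * (a * x') + b' * (a * y') := by linear_combination (-a) * hbez'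
      rw [haeq]
      exact dvd_add (dvd_mul_right a' _) (haay'.mul_left b')
    have haE := assoc_symm ha0 ha ha' haa' ha'a
    have hbE := assoc_symm hb0 hb hb' hbb' hb'b
    rcases haE with haE | haE <;> rcases hbE with hbE | hbE
    · exact Or.inl ⟨haE.symm, hbE.symm⟩
    · exfalso
      rw [haE, hbE] at hPP
      have : (2 : LaurentPolynomial ℤ) * (a * b) = 0 := by linear_combination hPP
      rcases mul_eq_zero.mp this with h | h
      · exact two_ne h
      · exact hP0 (by rw [hfac, h])
    · exfalso
      rw [haE, hbE] at hPP
      have : (2 : LaurentPolynomial ℤ) * (a * b) = 0 := by linear_combination hPP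
      rcases mul_eq_zero.mp this with h | h
      · exact two_ne h
      · exact hP0 (by rw [hfac, h])
    · refine Or.inr ⟨?_, ?_⟩
      · rw [haE]; ring
      · rw [hbE]; ring

/-- If two coprime symmetric factorizations P = a·b = a'·b' yield unitary units that agree
mod 2P up to a unit v of ℤ[t,t⁻¹], then v = ±1 and (a,b) = ±(a',b') or (a,b) = ±(b',a'). -/
theorem stmt3 (P a b a' b' x y x' y' v : LaurentPolynomial ℤ)
    (hP : invert P = P) (ha : invert a = a) (hb : invert b = b)
    (ha' : invert a' = a') (hb' : invert b' = b')
    (hfac : P = a * b) (hfac' : P = a' * b')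
    (hbez : a * x + b * y = 1) (hbez' : a' * x' + b' * y' = 1)
    (hv : IsUnit v)
    (hcong : (2 * P) ∣ ((-(a * x) + b * y) - v * (-(a' * x') + b' * y'))) :
    (v = 1 ∨ v = -1) ∧
      ((a = a' ∧ b = b') ∨ (a = -a' ∧ b = -b') ∨ (a = b' ∧ b = a') ∨ (a = -b' ∧ b = -a')) := by
  obtain ⟨c, hc⟩ := hcong
  have hdvd2 : (2 : LaurentPolynomial ℤ) ∣ 1 - v :=
    ⟨P * c + a * x - v * (a' * x'), by linear_combination hc + v * hbez' - hbez⟩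
  obtain ⟨n, hn | hn⟩ := unit_form hv
  · have hn0 : n = 0 := two_dvd_T (Or.inl (hn ▸ hdvd2))
    have hv1 : v = 1 := by rw [hn, hn0, T_zero]
    subst hv1
    have h1 : P ∣ a * x - a' * x' := by
      refine ⟨-c, ?_⟩
      have h2c : (2 : LaurentPolynomial ℤ) * (a * x - a' * x')
          = (2 : LaurentPolynomial ℤ) * (P * (-c)) := by
        linear_combination hbez - hbez' - hc
      exact mul_left_cancel₀ two_ne h2c
    have h2 : P ∣ b * y - b' * y' := by
      refine ⟨c, ?_⟩
      have h2c : (2 : LaurentPolynomial ℤ) * (b * y - b' * y')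
          = (2 : LaurentPolynomial ℤ) * (P * c) := by
        linear_combination hc + hbez - hbez'
      exact mul_left_cancel₀ two_ne h2c
    rcases core P a b a' b' x y x' y' ha hb ha' hb' hfac hfac' hbez hbez' h1 h2 with
      ⟨h, h'⟩ | ⟨h, h'⟩
    · exact ⟨Or.inl rfl, Or.inl ⟨h, h'⟩⟩
    · exact ⟨Or.inl rfl, Or.inr (Or.inl ⟨h, h'⟩)⟩
  · have hdvd2' : (2 : LaurentPolynomial ℤ) ∣ 1 + T n := by
      rw [hn] at hdvd2
      simpa [sub_neg_eq_add] using hdvd2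
    have hn0 : n = 0 := two_dvd_T (Or.inr hdvd2')
    have hv1 : v = -1 := by rw [hn, hn0, T_zero]
    subst hv1
    have hfac'' : P = b' * a' := by rw [hfac']; ring
    have hbez'' : b' * y' + a' * x' = 1 := by linear_combination hbez'
    have h1 : P ∣ a * x - b' * y' := by
      refine ⟨-c, ?_⟩
      have h2c : (2 : LaurentPolynomial ℤ) * (a * x - b' * y')
          = (2 : LaurentPolynomial ℤ) * (P * (-c)) := by
        linear_combination hbez - hbez' - hc
      exact mul_left_cancel₀ two_ne h2c
    have h2 : P ∣ b * y - a' * x' := by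
      refine ⟨c, ?_⟩
      have h2c : (2 : LaurentPolynomial ℤ) * (b * y - a' * x')
          = (2 : LaurentPolynomial ℤ) * (P * c) := by
        linear_combination hc + hbez - hbez'
      exact mul_left_cancel₀ two_ne h2c
    rcases core P a b b' a' x y y' x' ha hb hb' ha' hfac hfac'' hbez hbez'' h1 h2 with
      ⟨h, h'⟩ | ⟨h, h'⟩
    · exact ⟨Or.inr rfl, Or.inr (Or.inr (Or.inl ⟨h, h'⟩))⟩
    · exact ⟨Or.inr rfl, Or.inr (Or.inr (Or.inr ⟨h, h'⟩))⟩
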